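/- Let γ : ℝ → ℝ² be defined by γ(t) = (t, 0), and let p₁ = (a, 0), p₂ = (b, 0) with a ≠ b, p = (p₁, p₂). Then there exists a diffeomorphism H : ℝ² → ℝ² such that H(D_p(γ(t))) = (t, 0) for all t ∈ ℝ; in particular, D_p ∘ γ : ℝ → ℝ² is an immersion with normal crossings. -/

import Mathlib

noncomputable section

abbrev E2 := EuclideanSpace ℝ (Fin 2)

/-- The point `(a, b) ∈ ℝ²`. -/
def pt (a b : ℝ) : E2 := (EuclideanSpace.equiv (Fin 2) ℝ).symm ![a, b]

/-- The distance-squared mapping `D_p : ℝ² → ℝ²` associated to `p = (p₁, p₂)`. -/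
def Dp (p₁ p₂ : E2) (x : E2) : E2 :=
  (EuclideanSpace.equiv (Fin 2) ℝ).symm ![‖x - p₁‖ ^ 2, ‖x - p₂‖ ^ 2]

/-- `f : ℝ → ℝ²` is an immersion with normal crossings: it is smooth, `f′(q) ≠ 0` everywhere,
every fiber has at most 2 elements, and at any two distinct points with the same image the
subspace `f′(q₁)ℝ + f′(q₂)ℝ` of `ℝ²` has dimension 2. -/
def IsImmersionWithNormalCrossingsR (f : ℝ → E2) : Prop :=
  ContDiff ℝ (⊤ : ℕ∞) f ∧
  (∀ q : ℝ, deriv f q ≠ 0) ∧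
  (∀ q₁ q₂ q₃ : ℝ, f q₁ = f q₂ → f q₂ = f q₃ → q₁ = q₂ ∨ q₁ = q₃ ∨ q₂ = q₃) ∧
  (∀ q₁ q₂ : ℝ, q₁ ≠ q₂ → f q₁ = f q₂ →
    Module.finrank ℝ ↥(Submodule.span ℝ {deriv f q₁, deriv f q₂}) = 2)

@[simp] lemma pt_app0 (c d : ℝ) : pt c d 0 = c := rfl
@[simp] lemma pt_app1 (c d : ℝ) : pt c d 1 = d := rfl
lemma pt_sub (a b c d : ℝ) : pt a b - pt c d = pt (a-c) (b-d) := by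
  ext i; fin_cases i <;> rfl
lemma pt_inj {a b c d : ℝ} (h : pt a b = pt c d) : a = c ∧ b = d :=
  ⟨congrArg (fun x : E2 => x 0) h, congrArg (fun x : E2 => x 1) h⟩
lemma norm_pt_sq (a b : ℝ) : ‖pt a b‖^2 = a^2 + b^2 := by
  rw [EuclideanSpace.norm_eq, Real.sq_sqrt (by positivity)]
  simp [pt, Fin.sum_univ_two, sq_abs]
lemma contDiff_pt_comp {α : Type*} [NormedAddCommGroup α] [NormedSpace ℝ α]
    {f g : α → ℝ} (hf : ContDiff ℝ (⊤ : ℕ∞) f) (hg : ContDiff ℝ (⊤ : ℕ∞) g) :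
    ContDiff ℝ (⊤ : ℕ∞) (fun x => pt (f x) (g x)) := by
  have : (fun x => pt (f x) (g x)) = (EuclideanSpace.equiv (Fin 2) ℝ).symm ∘ fun x => ![f x, g x] := rfl
  rw [this]
  refine ((EuclideanSpace.equiv (Fin 2) ℝ).symm.contDiff).comp (contDiff_pi.2 ?_)
  intro i; fin_cases i <;> simpa
lemma contDiff_coord (i : Fin 2) : ContDiff ℝ (⊤ : ℕ∞) (fun x : E2 => x i) :=
  (EuclideanSpace.proj i : E2 →L[ℝ] ℝ).contDiff
lemma hasDerivAt_pt {u v : ℝ → ℝ} {u' v' t : ℝ} (hu : HasDerivAt u u' t)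
    (hv : HasDerivAt v v' t) : HasDerivAt (fun t => pt (u t) (v t)) (pt u' v') t := by
  have h : HasDerivAt (fun t => (![u t, v t] : Fin 2 → ℝ)) ![u', v'] t := by
    apply hasDerivAt_pi.2
    intro i; fin_cases i <;> simpa
  exact ((EuclideanSpace.equiv (Fin 2) ℝ).symm.toContinuousLinearMap.hasFDerivAt.comp_hasDerivAt t h : )

lemma Dp_eq (a b t : ℝ) : Dp (pt a 0) (pt b 0) (pt t 0) = pt ((t-a)^2) ((t-b)^2) := by
  show pt (‖pt t 0 - pt a 0‖^2) (‖pt t 0 - pt b 0‖^2) = _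
  rw [pt_sub, pt_sub, norm_pt_sq, norm_pt_sq]
  norm_num

theorem stmt12 (a b : ℝ) (hab : a ≠ b) :
    (∃ H : E2 ≃ E2, ContDiff ℝ (⊤ : ℕ∞) H ∧ ContDiff ℝ (⊤ : ℕ∞) H.symm ∧
      ∀ t : ℝ, H (Dp (pt a 0) (pt b 0) (pt t 0)) = pt t 0) ∧
    IsImmersionWithNormalCrossingsR (fun t => Dp (pt a 0) (pt b 0) (pt t 0)) := by
  have hba : b - a ≠ 0 := sub_ne_zero.2 (Ne.symm hab)
  set L : E2 → ℝ := fun x => (x 0 - x 1)/(2*(b-a)) + (a+b)/2 with hL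
  set H : E2 ≃ E2 :=
    { toFun := fun x => pt (L x) (x 1 - (L x - b)^2)
      invFun := fun y => pt (y 1 + (y 0 - b)^2 + 2*(b-a)*(y 0 - (a+b)/2)) (y 1 + (y 0 - b)^2)
      left_inv := by
        intro x
        ext i
        fin_cases i <;> · show _ = x _; simp only [hL, Fin.zero_eta, Fin.mk_one, pt_app0, pt_app1]; field_simp; try ring
      right_inv := by
        intro y
        ext i
        fin_cases i <;> · show _ = y _; simp only [hL, Fin.zero_eta, Fin.mk_one, pt_app0, pt_app1]; field_simp; try ring } with hH
  have hid : ∀ t : ℝ, H (Dp (pt a 0) (pt b 0) (pt t 0)) = pt t 0 := by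
    intro t
    rw [Dp_eq]
    show pt _ _ = _
    have hLv : L (pt ((t-a)^2) ((t-b)^2)) = t := by
      show ((t-a)^2 - (t-b)^2)/(2*(b-a)) + (a+b)/2 = t
      field_simp; try ring
    rw [hLv]
    simp
  refine ⟨⟨H, ?_, ?_, hid⟩, ?_⟩
  · exact contDiff_pt_comp
      (((contDiff_coord 0).sub (contDiff_coord 1)).div_const _ |>.add contDiff_const)
      ((contDiff_coord 1).sub ((((((contDiff_coord 0).sub (contDiff_coord 1)).div_const _).add
        contDiff_const).sub contDiff_const).pow 2))
  · exact contDiff_pt_comp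
      ((((contDiff_coord 1).add (((contDiff_coord 0).sub contDiff_const).pow 2)).add
        (contDiff_const.mul ((contDiff_coord 0).sub contDiff_const))))
      ((contDiff_coord 1).add (((contDiff_coord 0).sub contDiff_const).pow 2))
  have hf : (fun t => Dp (pt a 0) (pt b 0) (pt t 0)) = fun t => pt ((t-a)^2) ((t-b)^2) := by
    funext t; exact Dp_eq a b t
  rw [hf]
  have hinj : Function.Injective (fun t => pt ((t-a)^2) ((t-b)^2) : ℝ → E2) := by
    intro s t h
    have h2 : H (pt ((s-a)^2) ((s-b)^2)) = H (pt ((t-a)^2) ((t-b)^2)) := congrArg H h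
    rw [← Dp_eq a b s, ← Dp_eq a b t, hid s, hid t] at h2
    exact (pt_inj h2).1
  have hd : ∀ q : ℝ, deriv (fun t => pt ((t-a)^2) ((t-b)^2) : ℝ → E2) q
      = pt (2*(q-a)) (2*(q-b)) := by
    intro q
    refine HasDerivAt.deriv (hasDerivAt_pt ?_ ?_)
    · simpa using ((hasDerivAt_id q).sub_const a).fun_pow 2
    · simpa using ((hasDerivAt_id q).sub_const b).fun_pow 2
  refine ⟨?_, ?_, ?_, ?_⟩
  · exact contDiff_pt_comp ((contDiff_id.sub contDiff_const).pow 2)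
      ((contDiff_id.sub contDiff_const).pow 2)
  · intro q hq
    rw [hd q] at hq
    have h0 : pt (2*(q-a)) (2*(q-b)) = pt 0 0 := by
      rw [hq]; ext i; fin_cases i <;> rfl
    obtain ⟨h1, h2⟩ := pt_inj h0
    exact hab (by linarith)
  · intro q₁ q₂ q₃ h12 _
    exact Or.inl (hinj h12)
  · intro q₁ q₂ hne heq
    exact absurd (hinj heq) hne
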